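/- Let 𝕂 be a field of characteristic p > 0 and let G = ([n], E) be a simple graph whose vertex n has degree t with neighbors 1, …, t. Let D = det(A), where A is the t×t matrix (y_{ij}) with 1 ≤ i ≤ t and d−t+1 ≤ j ≤ d, let 𝔐 = (y_{ij} : i ∈ [n], j ∈ [d]) be the irrelevant maximal ideal of S, and for q = p^e let 𝔐^{[q]} = (y_{ij}^q : i ∈ [n], j ∈ [d]). If d ≥ pmd(G) + t, then for every integer e > 0, D · ∏_{{i,j} ∈ E} f_{ij}^{p^e − 1} ∉ 𝔐^{[p^e]}. -/

import Mathlib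

open MvPolynomial

/-- The polynomial `f_{ij} = ∑_{k=1}^d y_{ik} y_{jk}` associated to an edge `{i,j}`. -/
noncomputable def edgePoly (K : Type) [Field K] {V : Type} (d : ℕ) :
    Sym2 V → MvPolynomial (V × Fin d) K :=
  Sym2.lift ⟨fun i j => ∑ k : Fin d, MvPolynomial.X (i, k) * MvPolynomial.X (j, k),
    fun i j => Finset.sum_congr rfl fun k _ => mul_comm _ _⟩

/-- The Lovász–Saks–Schrijver ideal `L_G(d)` of a simple graph `G`. -/
noncomputable def lssIdeal (K : Type) [Field K] {V : Type} (G : SimpleGraph V) (d : ℕ) :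
    Ideal (MvPolynomial (V × Fin d) K) :=
  Ideal.span (edgePoly K d '' G.edgeSet)

/-- The total weight `w(i) + w(j)` of an edge `e = {i,j}`. -/
noncomputable def edgeWeight {V : Type} (w : V → ℝ) : Sym2 V → ℝ :=
  Sym2.lift ⟨fun i j => w i + w j, fun i j => add_comm (w i) (w j)⟩

/-- `M` is a positive matching of the edge set `E`. -/
def IsPositiveMatching {V : Type} (E M : Set (Sym2 V)) : Prop :=
  M ⊆ E ∧ (M.Pairwise fun e e' => ∀ v : V, ¬(v ∈ e ∧ v ∈ e')) ∧
    ∃ w : V → ℝ, (∀ e ∈ M, 0 < edgeWeight w e) ∧ ∀ e ∈ E \ M, edgeWeight w e < 0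

/-- `F 0, …, F (p-1)` is a positive matching decomposition of the edge set `E`. -/
def IsPMDecomposition {V : Type} (E : Set (Sym2 V)) {p : ℕ} (F : Fin p → Set (Sym2 V)) : Prop :=
  (⋃ i, F i) = E ∧ (Pairwise fun i j => Disjoint (F i) (F j)) ∧
    ∀ i : Fin p, IsPositiveMatching (E \ ⋃ j : Fin p, ⋃ _ : j < i, F j) (F i)

/-- The positive matching decomposition number `pmd(G)`. -/
noncomputable def pmd {V : Type} (G : SimpleGraph V) : ℕ :=
  sInf {p | ∃ F : Fin p → Set (Sym2 V), IsPMDecomposition G.edgeSet F}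

/-!
Let `F₀, …, F_{m-1}` be a positive matching decomposition of `G` with vertex weights `w_c`.
Weighting the variable `y_{v,c}` by `T^{m-c} w_c(v)` for `c < m` and by `0` in the other
columns, for `T` large the unique heaviest monomial of `f_e`, `e = {a, b} ∈ F_c`, is
`y_{a,c} y_{b,c}`: in earlier columns `e` has negative weight, and later columns are outweighed
by the extra factor `T`. So `∏ f_e^{q-1}` has the unique heaviest monomial
`∏ (y_{a,c} y_{b,c})^{q-1}` with coefficient `1`, and its base is squarefree because each `F_c`
is a matching. Since `d ≥ m + t`, the determinant lives in the last `t` columns, where the weight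
vanishes; hence its diagonal term times that monomial occurs in `D · ∏ f_e^{q-1}` with
coefficient `1`. All its exponents are below `q`, so it lies outside the monomial ideal `𝔐^{[q]}`.
-/

namespace MvPolynomial

open Finsupp

variable {σ R : Type*} [CommSemiring R]

def IsMonicWeightTop (ω : σ → ℝ) (f : MvPolynomial σ R) (a : σ →₀ ℕ) : Prop :=
  coeff a f = 1 ∧ ∀ μ ∈ f.support, μ ≠ a → weight ω μ < weight ω a

variable {ω : σ → ℝ}

theorem coeff_add_mul_of_weight {f g : MvPolynomial σ R} {a b : σ →₀ ℕ}
    (hf : ∀ μ ∈ f.support, weight ω μ ≤ weight ω a)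
    (hg : ∀ ν ∈ g.support, ν ≠ b → weight ω ν < weight ω b) :
    coeff (a + b) (f * g) = coeff a f * coeff b g := by
  classical
  rw [coeff_mul]
  refine Finset.sum_eq_single_of_mem (a, b) (Finset.HasAntidiagonal.mem_antidiagonal.2 rfl) ?_
  rintro ⟨μ, ν⟩ hμν hne
  have hsum : μ + ν = a + b := Finset.HasAntidiagonal.mem_antidiagonal.1 hμν
  by_contra hc
  have hμ : μ ∈ f.support := mem_support_iff.2 fun h => hc (by simp [h])
  have hν : ν ∈ g.support := mem_support_iff.2 fun h => hc (by simp [h])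
  have hνb : ν = b := by
    by_contra hνb
    have := congrArg (weight ω) hsum
    simp only [map_add] at this
    linarith [hf μ hμ, hg ν hν hνb]
  subst hνb
  exact hne (by rw [add_right_cancel hsum])

namespace IsMonicWeightTop

theorem one : IsMonicWeightTop ω (1 : MvPolynomial σ R) 0 := by
  classical
  refine ⟨coeff_zero_one, fun μ hμ hne => ?_⟩
  rw [mem_support_iff, coeff_one, if_neg (Ne.symm hne)] at hμ
  exact absurd rfl hμ

theorem mul {f g : MvPolynomial σ R} {a b : σ →₀ ℕ} (hf : IsMonicWeightTop ω f a)
    (hg : IsMonicWeightTop ω g b) : IsMonicWeightTop ω (f * g) (a + b) := by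
  classical
  have hf_le : ∀ μ ∈ f.support, weight ω μ ≤ weight ω a := fun μ hμ => by
    rcases eq_or_ne μ a with rfl | hne
    exacts [le_rfl, (hf.2 μ hμ hne).le]
  refine ⟨by rw [coeff_add_mul_of_weight hf_le hg.2, hf.1, hg.1, one_mul], fun ρ hρ hne => ?_⟩
  obtain ⟨μ, hμ, ν, hν, rfl⟩ := Finset.mem_add.1 (support_mul f g hρ)
  simp only [map_add]
  rcases eq_or_ne ν b with rfl | hνb
  · exact add_lt_add_of_lt_of_le (hf.2 μ hμ fun h => hne (by rw [h])) le_rfl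
  · exact add_lt_add_of_le_of_lt (hf_le μ hμ) (hg.2 ν hν hνb)

theorem pow {f : MvPolynomial σ R} {a : σ →₀ ℕ} (hf : IsMonicWeightTop ω f a) :
    ∀ m : ℕ, IsMonicWeightTop ω (f ^ m) (m • a)
  | 0 => by simpa using one
  | m + 1 => by simpa [pow_succ, succ_nsmul] using (hf.pow m).mul hf

theorem prod {ι : Type*} {s : Finset ι} {f : ι → MvPolynomial σ R} {a : ι → σ →₀ ℕ}
    (hf : ∀ i ∈ s, IsMonicWeightTop ω (f i) (a i)) :
    IsMonicWeightTop ω (∏ i ∈ s, f i) (∑ i ∈ s, a i) := by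
  induction s using Finset.cons_induction with
  | empty => simpa using one
  | cons i s his ih =>
    rw [Finset.prod_cons, Finset.sum_cons]
    exact (hf i (s.mem_cons_self i)).mul (ih fun j hj => hf j (Finset.mem_cons_of_mem hj))

end IsMonicWeightTop

theorem isMonicWeightTop_sum_monomial {ι : Type*} [Fintype ι] {u : ι → σ →₀ ℕ}
    (hu : Function.Injective u) {c : ι} (hc : ∀ k ≠ c, weight ω (u k) < weight ω (u c)) :
    IsMonicWeightTop ω (∑ k, monomial (u k) (1 : R)) (u c) := by
  classical
  refine ⟨by simp [coeff_sum, coeff_monomial, hu.eq_iff], fun μ hμ hne => ?_⟩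
  obtain ⟨k, -, hk⟩ := Finset.mem_biUnion.1 (support_sum hμ)
  obtain rfl := Finset.mem_singleton.1 (support_monomial_subset hk)
  exact hc k (fun h => hne (h ▸ rfl))

theorem notMem_span_X_pow {f : MvPolynomial σ R} {N : ℕ} {a : σ →₀ ℕ} (ha : coeff a f ≠ 0)
    (hlt : ∀ x, a x < N) : f ∉ Ideal.span (Set.range fun x => (X x : MvPolynomial σ R) ^ N) := by
  have hspan : (Set.range fun x => (X x : MvPolynomial σ R) ^ N) =
      (fun s => monomial s (1 : R)) '' Set.range fun x => single x N := by
    rw [← Set.range_comp]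
    congr 1
    ext1 x
    exact X_pow_eq_monomial
  rw [hspan, mem_ideal_span_monomial_image]
  intro h
  obtain ⟨-, ⟨x, rfl⟩, hle⟩ := h a (mem_support_iff.2 ha)
  exact (hlt x).not_ge (by simpa using hle x)

theorem weight_eq_zero_of_mem_support {ω : σ → ℝ} {f : MvPolynomial σ R}
    (hω : ∀ x ∈ f.vars, ω x = 0) {μ : σ →₀ ℕ} (hμ : μ ∈ f.support) : weight ω μ = 0 := by
  rw [weight_apply, Finsupp.sum]
  exact Finset.sum_eq_zero fun x hx => by
    rw [hω x ((mem_vars_iff_mem_support x).2 ⟨μ, hμ, hx⟩), smul_zero]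

end MvPolynomial

namespace Matrix

open MvPolynomial Finsupp

variable {ι σ R : Type*} [Fintype ι] [DecidableEq ι] [CommRing R]

variable (ι R) in
theorem coeff_diag_det_mvPolynomialX :
    coeff (∑ i, Finsupp.single (i, i) 1) (det (mvPolynomialX ι ι R)) = 1 := by
  have hprod (τ : Equiv.Perm ι) : ∏ i, mvPolynomialX ι ι R (τ i) i =
      monomial (∑ i, Finsupp.single (τ i, i) 1) 1 := by
    simp [monomial_sum_one, X]
  rw [det_apply', coeff_sum, Finset.sum_eq_single 1]
  · rw [hprod]
    simp
  · intro τ _ hτ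
    obtain ⟨j, hj⟩ : ∃ j, τ j ≠ j := by
      by_contra! h
      exact hτ (Equiv.ext h)
    have hexp : ∑ i, Finsupp.single (τ i, i) 1 ≠ ∑ i, Finsupp.single (i, i) 1 := fun h => by
      have hdiag : (∑ i, Finsupp.single (i, i) 1 : ι × ι →₀ ℕ) (τ j, j) = 0 := by
        rw [finsetSum_apply]
        exact Finset.sum_eq_zero fun i _ => single_eq_of_ne fun hi => hj
          ((congrArg Prod.fst hi).trans (congrArg Prod.snd hi).symm)
      have hτj : 1 ≤ (∑ i, Finsupp.single (τ i, i) 1 : ι × ι →₀ ℕ) (τ j, j) := by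
        rw [finsetSum_apply]
        exact (Finset.single_le_sum (fun _ _ => Nat.zero_le _) (Finset.mem_univ j)).trans' (by simp)
      rw [h, hdiag] at hτj
      exact absurd hτj (by norm_num)
    rw [hprod, ← map_intCast (C : R →+* MvPolynomial (ι × ι) R), C_mul_monomial, coeff_monomial,
      if_neg hexp]
  · exact fun h => absurd (Finset.mem_univ 1) h

theorem det_of_X_eq_rename (v : ι → ι → σ) :
    det (of fun i j => (X (v i j) : MvPolynomial σ R)) =
      rename (Function.uncurry v) (det (mvPolynomialX ι ι R)) := by
  rw [AlgHom.map_det]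
  congr 1
  ext i j
  simp

theorem vars_det_of_X_subset (v : ι → ι → σ) {x : σ}
    (hx : x ∈ (det (of fun i j => (X (v i j) : MvPolynomial σ R))).vars) : ∃ i j, v i j = x := by
  classical
  rw [det_of_X_eq_rename] at hx
  obtain ⟨⟨i, j⟩, -, rfl⟩ := Finset.mem_image.1 (vars_rename _ _ hx)
  exact ⟨i, j, rfl⟩

theorem weight_eq_zero_of_mem_support_det {v : ι → ι → σ} {ω : σ → ℝ} (hω : ∀ i j, ω (v i j) = 0)
    {μ : σ →₀ ℕ} (hμ : μ ∈ (det (of fun i j => (X (v i j) : MvPolynomial σ R))).support) :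
    weight ω μ = 0 :=
  weight_eq_zero_of_mem_support (fun x hx => by
    obtain ⟨i, j, rfl⟩ := vars_det_of_X_subset v hx
    exact hω i j) hμ

theorem exists_coeff_det_of_X_eq_one {v : ι → ι → σ}
    (hv : Function.Injective (Function.uncurry v)) :
    ∃ a : σ →₀ ℕ, coeff a (det (of fun i j => (X (v i j) : MvPolynomial σ R))) = 1 ∧
      ∀ x, a x ≤ 1 ∧ ((∀ i j, v i j ≠ x) → a x = 0) := by
  refine ⟨mapDomain (Function.uncurry v) (∑ i, Finsupp.single (i, i) 1), ?_, fun x => ?_⟩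
  · rw [det_of_X_eq_rename, coeff_rename_mapDomain _ hv, coeff_diag_det_mvPolynomialX]
  · by_cases hx : x ∈ Set.range (Function.uncurry v)
    · obtain ⟨⟨i, j⟩, rfl⟩ := hx
      refine ⟨?_, fun h => absurd rfl (h i j)⟩
      rw [mapDomain_apply hv, finsetSum_apply, Finset.sum_eq_single i
        (fun k _ hk => single_eq_of_ne fun h => hk (congrArg Prod.fst h).symm) (by simp),
        Finsupp.single_apply]
      split <;> simp
    · rw [mapDomain_of_notMem_range _ _ hx]
      exact ⟨zero_le_one, fun _ => rfl⟩

end Matrix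

section PositiveMatching

variable {V : Type}

theorem edgeWeight_const_mul (a : ℝ) (w : V → ℝ) (e : Sym2 V) :
    edgeWeight (fun v => a * w v) e = a * edgeWeight w e := by
  induction e using Sym2.ind
  simp only [edgeWeight, Sym2.lift_mk]
  ring

theorem edgeWeight_zero (e : Sym2 V) : edgeWeight 0 e = 0 := by
  induction e using Sym2.ind
  simp [edgeWeight]

theorem isPositiveMatching_singleton {E : Set (Sym2 V)} (hE : ∀ e ∈ E, ¬e.IsDiag) {e : Sym2 V}
    (he : e ∈ E) : IsPositiveMatching E {e} := by
  classical
  refine ⟨Set.singleton_subset_iff.2 he, Set.pairwise_singleton _ _,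
    fun v => if v ∈ e then 1 else -3, ?_, fun e' ⟨he', hne⟩ => ?_⟩
  · simp only [Set.mem_singleton_iff, forall_eq]
    induction e using Sym2.ind
    simp [edgeWeight]
  · induction e' using Sym2.ind with
    | _ x y =>
      have hxy : x ≠ y := fun h => hE _ he' (Sym2.mk_isDiag_iff.2 h)
      have hboth : ¬(x ∈ e ∧ y ∈ e) := fun h => hne ((Sym2.mem_and_mem_iff hxy).1 h).symm
      simp only [edgeWeight, Sym2.lift_mk]
      split_ifs with hx hy hy
      · exact absurd ⟨hx, hy⟩ hboth
      all_goals norm_num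

theorem exists_isPMDecomposition {E : Set (Sym2 V)} (hE : E.Finite) (hdiag : ∀ e ∈ E, ¬e.IsDiag) :
    ∃ m, ∃ F : Fin m → Set (Sym2 V), IsPMDecomposition E F := by
  have := hE.to_subtype
  let f := (Finite.equivFin E).symm
  refine ⟨_, fun i => {(f i : Sym2 V)}, ?_, fun i j hij => ?_, fun i => ?_⟩
  · rw [Set.iUnion_singleton_eq_range, Set.range_comp' Subtype.val f, f.range_eq_univ,
      Set.image_univ, Subtype.range_coe]
  · exact Set.disjoint_singleton.2 fun h => hij (f.injective (Subtype.ext h))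
  · refine isPositiveMatching_singleton (fun e he => hdiag e he.1) ⟨(f i).2, ?_⟩
    simp only [Set.mem_iUnion, Set.mem_singleton_iff, not_exists]
    exact fun j hj h => hj.ne (f.injective (Subtype.ext h.symm))

theorem SimpleGraph.exists_isPMDecomposition_pmd {V : Type} [Finite V] (G : SimpleGraph V) :
    ∃ F : Fin (pmd G) → Set (Sym2 V), IsPMDecomposition G.edgeSet F :=
  Nat.sInf_mem (exists_isPMDecomposition G.edgeSet.toFinite fun _ => G.not_isDiag_of_mem_edgeSet)

theorem pow_sub_mul_lt_pow_sub_mul {T r s : ℝ} {m c k : ℕ} (hT : 1 ≤ T) (hs : 0 < s) (hc : c < m)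
    (hkc : k ≠ c) (hneg : k < c → r < 0) (hr : r < T * s) : T ^ (m - k) * r < T ^ (m - c) * s := by
  have hTpos : 0 < T := zero_lt_one.trans_le hT
  rcases hkc.lt_or_gt with hk | hk
  · exact (mul_neg_of_pos_of_neg (pow_pos hTpos _) (hneg hk)).trans (by positivity)
  · calc T ^ (m - k) * r < T ^ (m - k) * (T * s) := mul_lt_mul_of_pos_left hr (pow_pos hTpos _)
      _ = T ^ (m - k + 1) * s := by ring
      _ ≤ T ^ (m - c) * s := mul_le_mul_of_nonneg_right (pow_le_pow_right₀ hT (by omega)) hs.le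

end PositiveMatching

namespace IsPMDecomposition

variable {V : Type} {E : Set (Sym2 V)} {m : ℕ} {F : Fin m → Set (Sym2 V)}

theorem subset (hF : IsPMDecomposition E F) (c : Fin m) : F c ⊆ E :=
  hF.1 ▸ Set.subset_iUnion F c

theorem exists_mem (hF : IsPMDecomposition E F) {e : Sym2 V} (he : e ∈ E) : ∃ c, e ∈ F c :=
  Set.mem_iUnion.1 (hF.1.symm ▸ he)

theorem eq_of_mem (hF : IsPMDecomposition E F) {e : Sym2 V} {c c' : Fin m} (hc : e ∈ F c)
    (hc' : e ∈ F c') : c = c' := by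
  by_contra h
  exact Set.disjoint_left.1 (hF.2.1 h) hc hc'

theorem notMem_of_mem_of_ne (hF : IsPMDecomposition E F) {e e' : Sym2 V} {c : Fin m} (he : e ∈ F c)
    (he' : e' ∈ F c) (hne : e ≠ e') {v : V} (hv : v ∈ e) : v ∉ e' :=
  fun hv' => (hF.2.2 c).2.1 he he' hne v ⟨hv, hv'⟩

theorem mem_diff_of_lt (hF : IsPMDecomposition E F) {e : Sym2 V} {c k : Fin m} (he : e ∈ F c)
    (hk : k < c) : e ∈ (E \ ⋃ j : Fin m, ⋃ _ : j < k, F j) \ F k := by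
  refine ⟨⟨hF.subset c he, ?_⟩, fun hek => hk.ne (hF.eq_of_mem hek he)⟩
  simp only [Set.mem_iUnion, not_exists]
  exact fun j hj hej => (hj.trans hk).ne (hF.eq_of_mem hej he)

theorem exists_columnWeight (hF : IsPMDecomposition E F) (hE : E.Finite) :
    ∃ ω : V → ℕ → ℝ, (∀ v k, m ≤ k → ω v k = 0) ∧
      ∀ c : Fin m, ∀ e ∈ F c, ∀ k ≠ (c : ℕ), edgeWeight (ω · k) e < edgeWeight (ω · c) e := by
  choose w hwpos hwneg using fun c => (hF.2.2 c).2.2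
  obtain ⟨T, hT1, hT⟩ : ∃ T : ℝ, 1 ≤ T ∧
      ∀ c, ∀ e ∈ F c, ∀ k, edgeWeight (w k) e < T * edgeWeight (w c) e := by
    refine ((Filter.eventually_ge_atTop 1).and (Filter.eventually_all.2 fun c =>
      (Filter.eventually_all_finite (hE.subset (hF.subset c))).2 fun e he =>
        Filter.eventually_all.2 fun k => ?_)).exists
    exact (Filter.tendsto_id.atTop_mul_const (hwpos c e he)).eventually_gt_atTop _
  let W : ℕ → V → ℝ := fun k => if h : k < m then w ⟨k, h⟩ else 0
  refine ⟨fun v k => T ^ (m - k) * W k v, fun v k hk => by simp [W, hk.not_gt], ?_⟩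
  intro c e he k hk
  simp only [edgeWeight_const_mul]
  have hWc : W c = w c := dif_pos c.2
  rw [hWc]
  refine pow_sub_mul_lt_pow_sub_mul hT1 (hwpos c e he) c.2 hk (fun hkc => ?_) ?_
  · have hkm : k < m := hkc.trans c.2
    simpa [W, hkm] using hwneg ⟨k, hkm⟩ e (hF.mem_diff_of_lt he hkc)
  · by_cases hkm : k < m
    · simpa [W, hkm] using hT c e he ⟨k, hkm⟩
    · simpa [W, hkm, edgeWeight_zero] using mul_pos (zero_lt_one.trans_le hT1) (hwpos c e he)

end IsPMDecomposition

section EdgePolynomial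

open MvPolynomial Finsupp

variable {V : Type} (d : ℕ)

noncomputable def edgeExponent (e : Sym2 V) (k : Fin d) : V × Fin d →₀ ℕ :=
  Sym2.lift ⟨fun a b => single (a, k) 1 + single (b, k) 1, fun _ _ => add_comm _ _⟩ e

variable {d}

theorem edgePoly_eq_sum_monomial (K : Type) [Field K] (e : Sym2 V) :
    edgePoly K d e = ∑ k, monomial (edgeExponent d e k) 1 := by
  induction e using Sym2.ind
  simp [edgePoly, edgeExponent, X, monomial_mul]

theorem edgeExponent_apply_ne_zero_iff {e : Sym2 V} {k : Fin d} {x : V × Fin d} :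
    edgeExponent d e k x ≠ 0 ↔ x.1 ∈ e ∧ x.2 = k := by
  classical
  induction e using Sym2.ind
  obtain ⟨v, l⟩ := x
  simp only [edgeExponent, Sym2.lift_mk, Finsupp.add_apply, single_apply, Sym2.mem_iff,
    Prod.ext_iff]
  split_ifs <;> grind

theorem edgeExponent_injective (e : Sym2 V) : Function.Injective (edgeExponent d e) := by
  intro k k' h
  have : edgeExponent d e k (e.out.1, k) ≠ 0 :=
    edgeExponent_apply_ne_zero_iff.2 ⟨e.out_fst_mem, rfl⟩
  exact (edgeExponent_apply_ne_zero_iff.1 (h ▸ this)).2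

theorem edgeExponent_apply_le_one {e : Sym2 V} (he : ¬e.IsDiag) (k : Fin d) (x : V × Fin d) :
    edgeExponent d e k x ≤ 1 := by
  classical
  induction e using Sym2.ind with
  | _ a b =>
    have hab : a ≠ b := fun h => he (Sym2.mk_isDiag_iff.2 h)
    simp only [edgeExponent, Sym2.lift_mk, Finsupp.add_apply, single_apply]
    split_ifs with ha hb
    · exact absurd (congrArg Prod.fst (ha.trans hb.symm)) hab
    all_goals simp

theorem weight_edgeExponent (ω : V × Fin d → ℝ) (e : Sym2 V) (k : Fin d) :
    weight ω (edgeExponent d e k) = edgeWeight (fun v => ω (v, k)) e := by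
  induction e using Sym2.ind
  simp [edgeExponent, edgeWeight, weight_single]

theorem isMonicWeightTop_edgePoly (K : Type) [Field K] {ω : V × Fin d → ℝ} {e : Sym2 V} {c : Fin d}
    (hc : ∀ k ≠ c, edgeWeight (fun v => ω (v, k)) e < edgeWeight (fun v => ω (v, c)) e) :
    IsMonicWeightTop ω (edgePoly K d e) (edgeExponent d e c) := by
  rw [edgePoly_eq_sum_monomial]
  exact isMonicWeightTop_sum_monomial (edgeExponent_injective e)
    (by simpa only [weight_edgeExponent] using hc)

theorem IsPMDecomposition.sum_edgeExponent_apply_le_one {s : Finset (Sym2 V)}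
    (hs : ∀ e ∈ s, ¬e.IsDiag) {m : ℕ} {F : Fin m → Set (Sym2 V)}
    (hF : IsPMDecomposition (s : Set (Sym2 V)) F) {col : s → Fin m} (hcol : ∀ e, ↑e ∈ F (col e))
    (hmd : m ≤ d) (x : V × Fin d) :
    (∑ e : s, edgeExponent d e (Fin.castLE hmd (col e))) x ≤ 1 := by
  rw [finsetSum_apply]
  by_cases h : ∃ e : s, edgeExponent d e (Fin.castLE hmd (col e)) x ≠ 0
  · obtain ⟨e, hx⟩ := h
    rw [Finset.sum_eq_single_of_mem e (Finset.mem_univ e) fun e' _ hne => ?_]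
    · exact edgeExponent_apply_le_one (hs e e.2) _ _
    by_contra hx'
    obtain ⟨hv, hk⟩ := edgeExponent_apply_ne_zero_iff.1 hx
    obtain ⟨hv', hk'⟩ := edgeExponent_apply_ne_zero_iff.1 hx'
    have hcol_eq : col e' = col e := Fin.castLE_injective hmd (hk'.symm.trans hk)
    exact hF.notMem_of_mem_of_ne (hcol e') (hcol_eq ▸ hcol e) (Subtype.coe_ne_coe.2 hne) hv' hv
  · simp only [not_exists, not_not] at h
    exact (Finset.sum_eq_zero fun e _ => h e).trans_le zero_le_one

theorem IsPMDecomposition.exists_isMonicWeightTop_prod_edgePoly (K : Type) [Field K]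
    {s : Finset (Sym2 V)} (hs : ∀ e ∈ s, ¬e.IsDiag) {m : ℕ} (hmd : m ≤ d)
    {F : Fin m → Set (Sym2 V)} (hF : IsPMDecomposition (s : Set (Sym2 V)) F) (N : ℕ) :
    ∃ ω : V × Fin d → ℝ, (∀ x : V × Fin d, m ≤ x.2 → ω x = 0) ∧
      ∃ b : V × Fin d →₀ ℕ, IsMonicWeightTop ω (∏ e ∈ s, edgePoly K d e ^ N) (N • b) ∧
        ∀ x, b x ≤ 1 ∧ (m ≤ x.2 → b x = 0) := by
  obtain ⟨ω, hω0, hωtop⟩ := hF.exists_columnWeight s.finite_toSet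
  choose col hcol using fun e : s => hF.exists_mem e.2
  refine ⟨fun x => ω x.1 x.2, fun x hx => hω0 _ _ hx,
    ∑ e : s, edgeExponent d e (Fin.castLE hmd (col e)), ?_,
    fun x => ⟨hF.sum_edgeExponent_apply_le_one hs hcol hmd x, fun hx => ?_⟩⟩
  · rw [Finset.smul_sum, ← Finset.prod_coe_sort]
    exact IsMonicWeightTop.prod fun e _ =>
      (isMonicWeightTop_edgePoly K (c := Fin.castLE hmd (col e)) fun k hk =>
        hωtop (col e) e (hcol e) k fun h => hk (Fin.ext h)).pow N
  · rw [finsetSum_apply]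
    refine Finset.sum_eq_zero fun e _ => by_contra fun h => ?_
    have hk : (x.2 : ℕ) = col e := congrArg Fin.val (edgeExponent_apply_ne_zero_iff.1 h).2
    exact hx.not_gt (hk ▸ (col e).2)

end EdgePolynomial

/-- Let `K` have characteristic `p > 0`, let `G` be a graph on `n+1` vertices whose last
vertex has degree `t` with neighbors the first `t` vertices, and let `D` be the
determinant of the `t × t` matrix of variables `(y_{ij})`, `1 ≤ i ≤ t`,
`d - t + 1 ≤ j ≤ d`.  If `d ≥ pmd(G) + t`, then for every `e > 0`,
`D · ∏_{{i,j} ∈ E} f_{ij}^{pᵉ-1}` is not in the Frobenius power `𝔐^{[pᵉ]}` of the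
irrelevant maximal ideal `𝔐` of `S`. -/
theorem lss_det_product_not_in_frobenius_power (K : Type) [Field K] (p : ℕ)
    (hp : p.Prime) (n d t : ℕ) (G : SimpleGraph (Fin (n + 1)))
    [DecidableRel G.Adj] (htn : t ≤ n) (htd : t ≤ d)
    (hpmd : pmd G + t ≤ d) :
    ∀ e : ℕ, 0 < e →
      Matrix.det (Matrix.of fun i j : Fin t =>
          (MvPolynomial.X (⟨i.1, by omega⟩, ⟨d - t + j.1, by omega⟩) :
            MvPolynomial (Fin (n + 1) × Fin d) K)) *
        ∏ ed ∈ G.edgeFinset, edgePoly K d ed ^ (p ^ e - 1) ∉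
      Ideal.span (Set.range fun q : Fin (n + 1) × Fin d =>
        (MvPolynomial.X q : MvPolynomial (Fin (n + 1) × Fin d) K) ^ p ^ e) := by
  intro e he
  have hq : 2 ≤ p ^ e := hp.two_le.trans (Nat.le_self_pow he.ne' p)
  obtain ⟨F, hF⟩ := G.exists_isPMDecomposition_pmd
  rw [← G.coe_edgeFinset] at hF
  obtain ⟨ω, hω0, b, hb, hb1⟩ := hF.exists_isMonicWeightTop_prod_edgePoly K
    (fun _ => G.not_isDiag_of_mem_edgeFinset) (by omega : pmd G ≤ d) (p ^ e - 1)
  let v (i j : Fin t) : Fin (n + 1) × Fin d := (⟨i.1, by omega⟩, ⟨d - t + j.1, by omega⟩)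
  have hv : Function.Injective (Function.uncurry v) := fun ⟨i, j⟩ ⟨i', j'⟩ h => by
    simp only [Function.uncurry_apply_pair, Prod.ext_iff, Fin.ext_iff, v] at h ⊢
    omega
  have hvω : ∀ i j, ω (v i j) = 0 := fun i j => hω0 _ (by simp [v]; omega)
  obtain ⟨a, ha, ha1⟩ := Matrix.exists_coeff_det_of_X_eq_one (R := K) hv
  have ha_mem : a ∈ (Matrix.det (Matrix.of fun i j => (X (v i j) : MvPolynomial _ K))).support :=
    mem_support_iff.2 (ha ▸ one_ne_zero)
  have hdisj (x : Fin (n + 1) × Fin d) : a x = 0 ∨ b x = 0 := by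
    by_cases hx : pmd G ≤ (x.2 : ℕ)
    · exact .inr ((hb1 x).2 hx)
    · exact .inl ((ha1 x).2 fun i j h => hx (h ▸ by simp [v]; omega))
  refine notMem_span_X_pow (a := a + (p ^ e - 1) • b) ?_ fun x => ?_
  · rw [coeff_add_mul_of_weight (fun μ hμ => ?_) hb.2, ha, hb.1, one_mul]
    · exact one_ne_zero
    rw [Matrix.weight_eq_zero_of_mem_support_det hvω hμ,
      Matrix.weight_eq_zero_of_mem_support_det hvω ha_mem]
  · have hax := (ha1 x).1
    have hbx := (hb1 x).1
    have hdx := hdisj x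
    simp only [Finsupp.add_apply, Finsupp.smul_apply, smul_eq_mul]
    interval_cases b x <;> omega
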